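/- Let N ≥ 1 and s ∈ (0, min(1, N/2)), and let v(r) = (1 + r²/c²)^{-(N-2s)/2} - (1 + 1/c²)^{-(N-2s)/2} for c ∈ (0, 1/3). Then there exist constants C₁, C₂ > 0 depending only on N and s such that C₁ c^N ≤ ∫₀¹ r^{N-1} |v(r)|^{2N/(N-2s)} dr ≤ C₂ c^N. -/

import Mathlib

/-!
On `r ≤ c` both `1 + r²/c² ≤ 2` and `1 + 1/c² ≥ 10` (as `c < 1/3`), so the truncated bubble is
at least `2^(-a/2) - 10^(-a/2)` there, and the integral over `(0, c)` already gives `≳ cⁿ`.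
Conversely the integrand is at most `r^(n-1)` everywhere and at most `r^(n-1) (c/r)^(2n)` for
`r ≥ c`, which integrate to at most `cⁿ / n` over `(0, c)` and `(c, 1)` respectively.
-/

open Real MeasureTheory Set intervalIntegral

noncomputable section

def truncatedBubble (a c r : ℝ) : ℝ :=
  (1 + r ^ 2 / c ^ 2) ^ (-a / 2) - (1 + 1 / c ^ 2) ^ (-a / 2)

/-- With `n = N` and `a = N - 2s`, the exponent `2n / a` is the fractional Sobolev exponent. -/
def bubbleIntegrand (n a c r : ℝ) : ℝ :=
  r ^ (n - 1) * |truncatedBubble a c r| ^ (2 * n / a)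

end

variable {n a b c r : ℝ}

lemma truncatedBubble_nonneg (ha : 0 ≤ a) (hr : |r| ≤ 1) : 0 ≤ truncatedBubble a c r := by
  have hr2 : r ^ 2 ≤ 1 := sq_le_one_iff_abs_le_one r |>.2 hr
  refine sub_nonneg.2 (rpow_le_rpow_of_nonpos (by positivity) ?_ (by linarith))
  gcongr

lemma abs_truncatedBubble_le_one (ha : 0 ≤ a) : |truncatedBubble a c r| ≤ 1 := by
  have hmem : ∀ t : ℝ, 0 ≤ t → (1 + t) ^ (-a / 2) ∈ Icc (0 : ℝ) 1 := fun t ht =>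
    ⟨by positivity, rpow_le_one_of_one_le_of_nonpos (by linarith) (by linarith)⟩
  obtain ⟨h₁, h₁'⟩ := hmem (r ^ 2 / c ^ 2) (by positivity)
  obtain ⟨h₂, h₂'⟩ := hmem (1 / c ^ 2) (by positivity)
  rw [truncatedBubble, abs_sub_le_iff]
  constructor <;> linarith

lemma truncatedBubble_le_div_rpow (ha : 0 ≤ a) (hc : 0 < c) (hr : 0 < r) :
    truncatedBubble a c r ≤ (c / r) ^ a := by
  have hbubble : (1 + r ^ 2 / c ^ 2) ^ (-a / 2) ≤ (r ^ 2 / c ^ 2) ^ (-a / 2) :=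
    rpow_le_rpow_of_nonpos (by positivity) (by linarith) (by linarith)
  have hpow : (r ^ 2 / c ^ 2) ^ (-a / 2) = (c / r) ^ a := by
    rw [neg_div, rpow_neg (by positivity), ← inv_rpow (by positivity), inv_div, ← div_pow,
      ← rpow_natCast, ← rpow_mul (by positivity)]
    ring_nf
  have htail : 0 ≤ (1 + 1 / c ^ 2) ^ (-a / 2) := by positivity
  rw [truncatedBubble]
  linarith

lemma two_rpow_sub_ten_rpow_le_truncatedBubble (ha : 0 ≤ a) (hc : 0 < c) (hc3 : c ≤ 1 / 3)
    (hr : |r| ≤ c) : (2 : ℝ) ^ (-a / 2) - 10 ^ (-a / 2) ≤ truncatedBubble a c r := by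
  have hr2 : r ^ 2 / c ^ 2 ≤ 1 :=
    div_le_one_of_le₀ (sq_le_sq' (abs_le.1 hr).1 (abs_le.1 hr).2) (sq_nonneg c)
  have hc2 : 9 ≤ 1 / c ^ 2 := by
    rw [le_div_iff₀ (by positivity)]
    nlinarith
  exact sub_le_sub (rpow_le_rpow_of_nonpos (by positivity) (by linarith) (by linarith))
    (rpow_le_rpow_of_nonpos (by norm_num) (by linarith) (by linarith))

lemma bubbleIntegrand_nonneg (hr : 0 ≤ r) : 0 ≤ bubbleIntegrand n a c r := by
  unfold bubbleIntegrand
  positivity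

lemma bubbleIntegrand_le_rpow (hn : 0 ≤ n) (ha : 0 ≤ a) (hr : 0 ≤ r) :
    bubbleIntegrand n a c r ≤ r ^ (n - 1) :=
  mul_le_of_le_one_right (by positivity)
    (rpow_le_one (abs_nonneg _) (abs_truncatedBubble_le_one ha) (by positivity))

lemma rpow_mul_le_bubbleIntegrand (hn : 0 ≤ n) (ha : 0 ≤ a) (hc : 0 < c) (hc3 : c ≤ 1 / 3)
    (hr : 0 ≤ r) (hrc : r ≤ c) :
    ((2 : ℝ) ^ (-a / 2) - 10 ^ (-a / 2)) ^ (2 * n / a) * r ^ (n - 1) ≤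
      bubbleIntegrand n a c r := by
  have hδ : 0 ≤ (2 : ℝ) ^ (-a / 2) - 10 ^ (-a / 2) :=
    sub_nonneg.2 (rpow_le_rpow_of_nonpos two_pos (by norm_num) (by linarith))
  have hv := two_rpow_sub_ten_rpow_le_truncatedBubble ha hc hc3 (abs_le.2 ⟨by linarith, hrc⟩)
  rw [bubbleIntegrand, mul_comm]
  gcongr
  exact hv.trans (le_abs_self _)

lemma bubbleIntegrand_le_mul_rpow (hn : 0 ≤ n) (ha : 0 < a) (hc : 0 < c) (hcr : c ≤ r)
    (hr1 : r ≤ 1) : bubbleIntegrand n a c r ≤ c ^ (2 * n) * r ^ (-n - 1) := by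
  have hr : 0 < r := hc.trans_le hcr
  have hv : |truncatedBubble a c r| ≤ (c / r) ^ a := by
    rw [abs_of_nonneg (truncatedBubble_nonneg ha.le (by rw [abs_of_pos hr]; exact hr1))]
    exact truncatedBubble_le_div_rpow ha.le hc hr
  calc bubbleIntegrand n a c r ≤ r ^ (n - 1) * ((c / r) ^ a) ^ (2 * n / a) := by
        unfold bubbleIntegrand
        gcongr
    _ = c ^ (2 * n) * r ^ (-n - 1) := by
        rw [← rpow_mul (by positivity), mul_div_cancel₀ _ ha.ne', div_rpow hc.le hr.le,
          div_eq_mul_inv, ← rpow_neg hr.le, mul_left_comm, ← rpow_add hr]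
        ring_nf

lemma intervalIntegrable_bubbleIntegrand (hn : 0 < n) (ha : 0 ≤ a) (hb : 0 ≤ b) :
    IntervalIntegrable (bubbleIntegrand n a c) volume 0 b := by
  refine (intervalIntegrable_rpow' (r := n - 1) (by linarith)).mono_fun' ?_ ?_
  · unfold bubbleIntegrand truncatedBubble
    fun_prop
  · rw [uIoc_of_le hb]
    refine ae_restrict_of_forall_mem measurableSet_Ioc fun r hr => ?_
    dsimp only
    rw [norm_of_nonneg (bubbleIntegrand_nonneg hr.1.le)]
    exact bubbleIntegrand_le_rpow hn.le ha hr.1.le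

lemma integral_rpow_sub_one (hn : 0 < n) (b : ℝ) : ∫ x in 0..b, x ^ (n - 1) = b ^ n / n := by
  rw [integral_rpow (Or.inl (by linarith)), sub_add_cancel, zero_rpow hn.ne', sub_zero]

lemma integral_rpow_neg_sub_one_le (hn : 0 < n) (hc : 0 < c) (hcb : c ≤ b) :
    ∫ x in c..b, x ^ (-n - 1) ≤ c ^ (-n) / n := by
  rw [integral_rpow (Or.inr ⟨by linarith, notMem_uIcc_of_lt hc (hc.trans_le hcb)⟩),
    sub_add_cancel, div_neg, ← neg_div, neg_sub]
  have hb : 0 ≤ b ^ (-n) := rpow_nonneg (hc.le.trans hcb) _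
  gcongr
  linarith

theorem mul_rpow_le_integral_bubbleIntegrand (hn : 0 < n) (ha : 0 ≤ a) (hc : 0 < c)
    (hc3 : c ≤ 1 / 3) :
    ((2 : ℝ) ^ (-a / 2) - 10 ^ (-a / 2)) ^ (2 * n / a) / n * c ^ n ≤
      ∫ r in 0..1, bubbleIntegrand n a c r := by
  have hf := intervalIntegrable_bubbleIntegrand (c := c) hn ha zero_le_one
  calc _ = ∫ r in 0..c, ((2 : ℝ) ^ (-a / 2) - 10 ^ (-a / 2)) ^ (2 * n / a) * r ^ (n - 1) := by
        rw [intervalIntegral.integral_const_mul, integral_rpow_sub_one hn]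
        ring
    _ ≤ ∫ r in 0..c, bubbleIntegrand n a c r :=
        integral_mono_on hc.le ((intervalIntegrable_rpow' (by linarith)).const_mul _)
          (intervalIntegrable_bubbleIntegrand hn ha hc.le)
          fun r hr => rpow_mul_le_bubbleIntegrand hn.le ha hc hc3 hr.1 hr.2
    _ ≤ ∫ r in 0..1, bubbleIntegrand n a c r :=
        integral_mono_interval le_rfl hc.le (by linarith)
          (ae_restrict_of_forall_mem measurableSet_Ioc fun r hr => bubbleIntegrand_nonneg hr.1.le)
          hf

theorem integral_bubbleIntegrand_le (hn : 0 < n) (ha : 0 < a) (hc : 0 < c) (hc1 : c ≤ 1) :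
    ∫ r in 0..1, bubbleIntegrand n a c r ≤ 2 / n * c ^ n := by
  have hf := intervalIntegrable_bubbleIntegrand (c := c) hn ha.le zero_le_one
  have hfc : IntervalIntegrable (bubbleIntegrand n a c) volume c 1 :=
    hf.mono_set (by rw [uIcc_of_le hc1, uIcc_of_le zero_le_one]; exact Icc_subset_Icc hc.le le_rfl)
  have htail : IntervalIntegrable (fun r => c ^ (2 * n) * r ^ (-n - 1)) volume c 1 :=
    (intervalIntegrable_rpow (Or.inr (notMem_uIcc_of_lt hc (by linarith)))).const_mul _
  rw [← integral_add_adjacent_intervals (intervalIntegrable_bubbleIntegrand hn ha.le hc.le) hfc]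
  calc _ ≤ (∫ r in 0..c, r ^ (n - 1)) + ∫ r in c..1, c ^ (2 * n) * r ^ (-n - 1) := by
        gcongr
        · exact integral_mono_on hc.le (intervalIntegrable_bubbleIntegrand hn ha.le hc.le)
            (intervalIntegrable_rpow' (by linarith))
            fun r hr => bubbleIntegrand_le_rpow hn.le ha.le hr.1
        · exact integral_mono_on hc1 hfc htail
            fun r hr => bubbleIntegrand_le_mul_rpow hn.le ha hc hr.1 hr.2
    _ ≤ c ^ n / n + c ^ (2 * n) * (c ^ (-n) / n) := by
        rw [integral_rpow_sub_one hn, intervalIntegral.integral_const_mul]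
        gcongr
        exact integral_rpow_neg_sub_one_le hn hc hc1
    _ = 2 / n * c ^ n := by
        rw [← mul_div_assoc, ← rpow_add hc]
        ring_nf

theorem radial_norm_of_truncated_bubble_general (N : ℕ) (hN : 1 ≤ N) (s : ℝ)
    (hs1 : s < min 1 ((N : ℝ) / 2)) :
    ∃ C₁ C₂ : ℝ, 0 < C₁ ∧ 0 < C₂ ∧
      ∀ c : ℝ, 0 < c → c < 1 / 3 →
        C₁ * c ^ (N : ℝ) ≤
          (∫ r in Set.Ioo (0 : ℝ) 1,
            r ^ ((N : ℝ) - 1) *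
              |(1 + r ^ 2 / c ^ 2) ^ (-(((N : ℝ) - 2 * s)) / 2) -
                (1 + 1 / c ^ 2) ^ (-(((N : ℝ) - 2 * s)) / 2)| ^
                (2 * (N : ℝ) / ((N : ℝ) - 2 * s))) ∧
        (∫ r in Set.Ioo (0 : ℝ) 1,
            r ^ ((N : ℝ) - 1) *
              |(1 + r ^ 2 / c ^ 2) ^ (-(((N : ℝ) - 2 * s)) / 2) -
                (1 + 1 / c ^ 2) ^ (-(((N : ℝ) - 2 * s)) / 2)| ^
                (2 * (N : ℝ) / ((N : ℝ) - 2 * s))) ≤ C₂ * c ^ (N : ℝ) := by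
  have hn : (0 : ℝ) < N := by exact_mod_cast hN
  have ha : 0 < (N : ℝ) - 2 * s := by linarith [hs1.trans_le (min_le_right _ _)]
  have hδ : 0 < (2 : ℝ) ^ (-((N : ℝ) - 2 * s) / 2) - 10 ^ (-((N : ℝ) - 2 * s) / 2) :=
    sub_pos.2 (rpow_lt_rpow_of_neg two_pos (by norm_num) (by linarith))
  refine ⟨_ ^ (2 * (N : ℝ) / ((N : ℝ) - 2 * s)) / N, 2 / N,
    div_pos (rpow_pos_of_pos hδ _) hn, by positivity, fun c hc hc3 => ?_⟩
  rw [← integral_Ioc_eq_integral_Ioo, ← integral_of_le zero_le_one]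
  exact ⟨mul_rpow_le_integral_bubbleIntegrand hn ha.le hc hc3.le,
    integral_bubbleIntegrand_le hn ha hc (by linarith)⟩

theorem radial_norm_of_truncated_bubble (N : ℕ) (hN : 1 ≤ N) (s : ℝ)
    (hs0 : 0 < s) (hs1 : s < min 1 ((N : ℝ) / 2)) :
    ∃ C₁ C₂ : ℝ, 0 < C₁ ∧ 0 < C₂ ∧
      ∀ c : ℝ, 0 < c → c < 1 / 3 →
        C₁ * c ^ (N : ℝ) ≤
          (∫ r in Set.Ioo (0 : ℝ) 1,
            r ^ ((N : ℝ) - 1) *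
              |(1 + r ^ 2 / c ^ 2) ^ (-(((N : ℝ) - 2 * s)) / 2) -
                (1 + 1 / c ^ 2) ^ (-(((N : ℝ) - 2 * s)) / 2)| ^
                (2 * (N : ℝ) / ((N : ℝ) - 2 * s))) ∧
        (∫ r in Set.Ioo (0 : ℝ) 1,
            r ^ ((N : ℝ) - 1) *
              |(1 + r ^ 2 / c ^ 2) ^ (-(((N : ℝ) - 2 * s)) / 2) -
                (1 + 1 / c ^ 2) ^ (-(((N : ℝ) - 2 * s)) / 2)| ^
                (2 * (N : ℝ) / ((N : ℝ) - 2 * s))) ≤ C₂ * c ^ (N : ℝ) :=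
  radial_norm_of_truncated_bubble_general N hN s hs1
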